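/- arXiv:2002.07085 — 3 statements merged into one kernel-verified Lean document; each statement's English description precedes it below -/
import Mathlib

section
/- Let Γ = (γ_{ij}) be a nonnegative infinite matrix bounded as an operator on ℓ¹, and Λ = diag(λ_i) with 0 < λ̲ ≤ λ_i ≤ λ̄ for all i. Assume the spectral radius of Ψ = Λ^{-1}Γ on ℓ¹ satisfies r(Ψ) < 1. Then there exist a sequence μ = (μ_i) ∈ ℓ^∞ with inf_i μ_i > 0 and a constant λ_∞ > 0 such that for every i ∈ ℕ: (Σ_j μ_j(−Λ + Γ)_{ji}) / μ_i ≤ −λ_∞, i.e., −μ_i λ_i + Σ_j μ_j γ_{ji} ≤ −λ_∞ μ_i. -/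
/-!
Let `R = (1 - Ψ)⁻¹`. As `Ψ` maps nonnegative sequences to nonnegative sequences, so does `R`, and
`μ = Rᵀ 𝟙`, i.e. `μ j = ∑ k, (R e_j) k`, solves `μ = 𝟙 + μ Ψ`. Hence `1 ≤ μ j ≤ ‖R‖`, and
`ν j = μ j / λ j` satisfies `-ν i λ i + ∑ j, ν j γ j i = -1`.

Positivity of `R` needs care: `r(Ψ)` is the real spectral radius, which does not make the Neumann
series `∑ Ψⁿ` converge. Instead, `R(t) = (t - Ψ)⁻¹` is positive for `t > ‖Ψ‖` by the Neumann series,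
and positivity propagates down to `t = 1`: `R(s) = (1 - (t - s) R(t))⁻¹ R(t)` is positive once
`(t - s) ‖R(t)‖ < 1`, and the set where `R` is positive is closed since `R` is continuous on
`[1, ∞) ⊆ ρ(Ψ)`.
-/

open scoped NNReal ENNReal lp

theorem spectrum.mem_resolventSet_of_spectralRadius_lt_of_le {A : Type*} [NormedRing A]
    [NormedAlgebra ℝ A] {a : A} {r : ℝ≥0} (hr : spectralRadius ℝ a < r) {t : ℝ} (ht : r ≤ t) :
    t ∈ resolventSet ℝ a := by
  refine spectrum.mem_resolventSet_of_spectralRadius_lt (hr.trans_le ?_)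
  rw [ENNReal.coe_le_coe, ← NNReal.coe_le_coe, coe_nnnorm, Real.norm_eq_abs]
  exact ht.trans (le_abs_self t)

theorem PointedCone.tsum_mem {M ι : Type*} [AddCommMonoid M] [Module ℝ M] [TopologicalSpace M]
    {C : PointedCone ℝ M} (hC : IsClosed (C : Set M)) {f : ι → M} (hf : ∀ i, f i ∈ C) :
    ∑' i, f i ∈ C := by
  by_cases h : Summable f
  · exact hC.mem_of_tendsto h.hasSum (.of_forall fun s => sum_mem fun i _ => hf i)
  · rw [tsum_eq_zero_of_not_summable h]
    exact C.zero_mem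

section PositiveOperators

variable {E : Type*} [NormedAddCommGroup E] [NormedSpace ℝ E] (K : PointedCone ℝ E)

def PointedCone.positiveOperators : PointedCone ℝ (E →L[ℝ] E) where
  carrier := {T | ∀ x ∈ K, T x ∈ K}
  add_mem' hS hT x hx := K.add_mem (hS x hx) (hT x hx)
  zero_mem' _ _ := K.zero_mem
  smul_mem' c _ hT x hx := Submodule.smul_mem K c (hT x hx)

namespace PointedCone

variable {K}

theorem mem_positiveOperators {T : E →L[ℝ] E} :
    T ∈ K.positiveOperators ↔ ∀ x ∈ K, T x ∈ K :=
  Iff.rfl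

theorem one_mem_positiveOperators : 1 ∈ K.positiveOperators := fun _ hx => hx

theorem mul_mem_positiveOperators {S T : E →L[ℝ] E} (hS : S ∈ K.positiveOperators)
    (hT : T ∈ K.positiveOperators) : S * T ∈ K.positiveOperators :=
  fun x hx => hS _ (hT x hx)

theorem pow_mem_positiveOperators {T : E →L[ℝ] E} (hT : T ∈ K.positiveOperators) (n : ℕ) :
    T ^ n ∈ K.positiveOperators := by
  induction n with
  | zero => exact one_mem_positiveOperators
  | succ n ih => exact pow_succ T n ▸ mul_mem_positiveOperators ih hT

theorem isClosed_positiveOperators (hK : IsClosed (K : Set E)) :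
    IsClosed (K.positiveOperators : Set (E →L[ℝ] E)) := by
  have : (K.positiveOperators : Set (E →L[ℝ] E)) =
      ⋂ x ∈ K, (fun T : E →L[ℝ] E => T x) ⁻¹' K := by
    ext T; simp [mem_positiveOperators]
  rw [this]
  exact isClosed_biInter fun x _ => hK.preimage (ContinuousLinearMap.apply ℝ E x).continuous

variable [CompleteSpace E]

theorem inverse_one_sub_mem_positiveOperators (hK : IsClosed (K : Set E)) {T : E →L[ℝ] E}
    (hT : T ∈ K.positiveOperators) (h : ‖T‖ < 1) :
    Ring.inverse (1 - T) ∈ K.positiveOperators := by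
  rw [← geom_series_eq_inverse T h]
  exact tsum_mem (isClosed_positiveOperators hK) (pow_mem_positiveOperators hT)

theorem inverse_unit_mul_one_sub_mem_positiveOperators (hK : IsClosed (K : Set E))
    {u : (E →L[ℝ] E)ˣ} (hu : ↑u⁻¹ ∈ K.positiveOperators) {T : E →L[ℝ] E}
    (hT : T ∈ K.positiveOperators) (h : ‖T‖ < 1) :
    Ring.inverse (↑u * (1 - T)) ∈ K.positiveOperators := by
  rw [← Units.val_oneSub T h, ← Units.val_mul, Ring.inverse_unit, mul_inv_rev, Units.val_mul]
  refine mul_mem_positiveOperators ?_ hu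
  rw [← Ring.inverse_unit, Units.val_oneSub]
  exact inverse_one_sub_mem_positiveOperators hK hT h

variable {Ψ : E →L[ℝ] E}

theorem resolvent_mem_positiveOperators_of_norm_lt (hK : IsClosed (K : Set E))
    (hΨ : Ψ ∈ K.positiveOperators) {t : ℝ} (ht : ‖Ψ‖ < t) :
    resolvent Ψ t ∈ K.positiveOperators := by
  have ht_pos : 0 < t := (norm_nonneg Ψ).trans_lt ht
  have ht_inv : 0 ≤ t⁻¹ := inv_nonneg.2 ht_pos.le
  let u : (E →L[ℝ] E)ˣ := Units.map (algebraMap ℝ (E →L[ℝ] E)) (Units.mk0 t ht_pos.ne')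
  have hu : (u : E →L[ℝ] E) * (1 - t⁻¹ • Ψ) = algebraMap ℝ _ t - Ψ := by
    simp [u, Algebra.algebraMap_eq_smul_one, mul_sub, ht_pos.ne']
  have hu_inv : ↑u⁻¹ ∈ K.positiveOperators := by
    simp only [u, Units.coe_map_inv, Units.val_inv_eq_inv_val, Units.val_mk0, MonoidHom.coe_coe,
      Algebra.algebraMap_eq_smul_one]
    exact Submodule.smul_mem _ ⟨t⁻¹, ht_inv⟩ (one_mem_positiveOperators (K := K))
  rw [resolvent, ← hu]
  refine inverse_unit_mul_one_sub_mem_positiveOperators hK hu_inv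
    (Submodule.smul_mem _ ⟨t⁻¹, ht_inv⟩ hΨ) ?_
  rwa [norm_smul, norm_inv, Real.norm_of_nonneg ht_pos.le, inv_mul_lt_one₀ ht_pos]

theorem resolvent_mem_positiveOperators_of_le (hK : IsClosed (K : Set E))
    {s t : ℝ} (ht : t ∈ resolventSet ℝ Ψ) (hR : resolvent Ψ t ∈ K.positiveOperators) (hst : s ≤ t)
    (hsmall : (t - s) * ‖resolvent Ψ t‖ < 1) :
    resolvent Ψ s ∈ K.positiveOperators := by
  rw [spectrum.resolvent_eq ht] at hR hsmall
  have hu : algebraMap ℝ (E →L[ℝ] E) s - Ψ = ↑ht.unit * (1 - (t - s) • ↑ht.unit⁻¹) := by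
    rw [mul_sub, mul_one, mul_smul_comm, Units.mul_inv, ht.unit_spec]
    simp only [Algebra.algebraMap_eq_smul_one, sub_smul]
    abel
  rw [resolvent, hu]
  refine inverse_unit_mul_one_sub_mem_positiveOperators hK hR
    (Submodule.smul_mem _ ⟨t - s, sub_nonneg.2 hst⟩ hR) ?_
  rwa [norm_smul, Real.norm_of_nonneg (sub_nonneg.2 hst)]

theorem resolvent_mem_positiveOperators_of_spectralRadius_lt (hK : IsClosed (K : Set E))
    (hΨ : Ψ ∈ K.positiveOperators) {r : ℝ≥0} (hr : spectralRadius ℝ Ψ < r) :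
    resolvent Ψ r ∈ K.positiveOperators := by
  set b := max (r : ℝ) (‖Ψ‖ + 1)
  have hρ : ∀ t ∈ Set.Icc (r : ℝ) b, t ∈ resolventSet ℝ Ψ := fun t ht =>
    spectrum.mem_resolventSet_of_spectralRadius_lt_of_le hr ht.1
  have hclosed : IsClosed ({t | resolvent Ψ t ∈ K.positiveOperators} ∩ Set.Icc (r : ℝ) b) := by
    rw [Set.inter_comm]
    refine ContinuousOn.preimage_isClosed_of_isClosed (fun t ht => ?_) isClosed_Icc
      (isClosed_positiveOperators hK)
    exact (spectrum.hasDerivAt_resolvent_const_left (hρ t ht)).continuousAt.continuousWithinAt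
  have hb : resolvent Ψ b ∈ K.positiveOperators :=
    resolvent_mem_positiveOperators_of_norm_lt hK hΨ ((lt_add_one _).trans_le (le_max_right _ _))
  refine hclosed.Icc_subset_of_forall_exists_lt hb ?_ ⟨le_rfl, le_max_left _ _⟩
  rintro t ⟨htP, htr, htb⟩ y hyt
  set δ := (‖resolvent Ψ t‖ + 1)⁻¹
  have hδ : 0 < δ := by positivity
  refine ⟨max y (t - δ), ?_, le_max_left _ _, max_lt hyt (by linarith)⟩
  refine resolvent_mem_positiveOperators_of_le hK (hρ t ⟨htr.le, htb⟩) htP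
    (max_le hyt.le (by linarith)) ?_
  calc (t - max y (t - δ)) * ‖resolvent Ψ t‖ ≤ δ * ‖resolvent Ψ t‖ := by
        gcongr; linarith [le_max_right y (t - δ)]
    _ < 1 := by
        rw [inv_mul_lt_one₀ (by positivity)]
        linarith

end PointedCone

end PositiveOperators

namespace lp

variable {ι : Type*}

def nonnegCone (p : ℝ≥0∞) : PointedCone ℝ (lp (fun _ : ι => ℝ) p) where
  carrier := {x | ∀ i, 0 ≤ x i}
  add_mem' hx hy i := add_nonneg (hx i) (hy i)
  zero_mem' _ := le_rfl
  smul_mem' c _ hx i := mul_nonneg c.2 (hx i)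

theorem mem_nonnegCone {p : ℝ≥0∞} {x : lp (fun _ : ι => ℝ) p} :
    x ∈ nonnegCone p ↔ ∀ i, 0 ≤ x i :=
  Iff.rfl

theorem isClosed_nonnegCone (p : ℝ≥0∞) [Fact (1 ≤ p)] :
    IsClosed (nonnegCone (ι := ι) p : Set (lp (fun _ : ι => ℝ) p)) := by
  have : (nonnegCone (ι := ι) p : Set (lp (fun _ : ι => ℝ) p)) = ⋂ i, {x | 0 ≤ x i} := by
    ext x; simp [mem_nonnegCone]
  rw [this]
  exact isClosed_iInter fun i => isClosed_le continuous_const (evalCLM ℝ _ p i).continuous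

theorem single_one_mem_nonnegCone [DecidableEq ι] (p : ℝ≥0∞) (i : ι) :
    (lp.single p i 1 : lp (fun _ : ι => ℝ) p) ∈ nonnegCone p := fun j => by
  rw [lp.single_apply, Pi.single_apply]
  split_ifs <;> norm_num

theorem tsumCLM_single [DecidableEq ι] (i : ι) :
    tsumCLM ℝ ι ℝ (lp.single 1 i 1) = 1 := by
  rw [tsumCLM_apply, tsum_eq_single i fun j hj => lp.single_apply_ne 1 i _ hj,
    lp.single_apply_self]

theorem hasSum_smul_apply_single [DecidableEq ι] {p : ℝ≥0∞} [Fact (1 ≤ p)] (hp : p ≠ ∞)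
    {F : Type*} [NormedAddCommGroup F] [NormedSpace ℝ F] (φ : lp (fun _ : ι => ℝ) p →L[ℝ] F)
    (x : lp (fun _ : ι => ℝ) p) : HasSum (fun i => x i • φ (lp.single p i 1)) (φ x) := by
  convert φ.hasSum (lp.hasSum_single hp x) using 2 with i
  rw [← map_smul, ← lp.single_smul, smul_eq_mul, mul_one]

theorem exists_bounded_left_solution_one_sub [DecidableEq ι] {Ψ : ℓ¹(ι, ℝ) →L[ℝ] ℓ¹(ι, ℝ)}
    (hΨ : Ψ ∈ (nonnegCone 1).positiveOperators) (hr : spectralRadius ℝ Ψ < 1) :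
    ∃ μ : ι → ℝ, ∃ M : ℝ, (∀ j, 1 ≤ μ j ∧ μ j ≤ M) ∧
      ∀ i, HasSum (fun j => Ψ (lp.single 1 i 1) j * μ j) (μ i - 1) := by
  replace hr : spectralRadius ℝ Ψ < (1 : ℝ≥0) := by rwa [ENNReal.coe_one]
  set R := resolvent Ψ ((1 : ℝ≥0) : ℝ)
  have hR : R ∈ (nonnegCone 1).positiveOperators :=
    PointedCone.resolvent_mem_positiveOperators_of_spectralRadius_lt
      (isClosed_nonnegCone (ι := ι) 1) hΨ (r := 1) hr
  have hRΨ : R = 1 + R * Ψ := by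
    have : R * (1 - Ψ) = 1 := by
      simpa [R, resolvent] using Ring.inverse_mul_cancel _
        (spectrum.mem_resolventSet_of_spectralRadius_lt_of_le (r := 1) hr le_rfl)
    rwa [mul_sub, mul_one, sub_eq_iff_eq_add] at this
  set φ := tsumCLM ℝ ι ℝ ∘L R
  have hφ (x : ℓ¹(ι, ℝ)) : φ x = tsumCLM ℝ ι ℝ x + φ (Ψ x) := by
    conv_lhs => rw [ContinuousLinearMap.comp_apply, hRΨ]
    simp [φ, map_add]
  refine ⟨fun j => φ (lp.single 1 j 1), ‖φ‖, fun j => ⟨?_, ?_⟩, fun i => ?_⟩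
  · dsimp only
    rw [hφ, tsumCLM_single, le_add_iff_nonneg_right]
    exact tsum_nonneg (hR _ (hΨ _ (single_one_mem_nonnegCone 1 j)))
  · calc φ (lp.single 1 j 1) ≤ ‖φ (lp.single 1 j 1)‖ := Real.le_norm_self _
      _ ≤ ‖φ‖ * ‖(lp.single 1 j 1 : ℓ¹(ι, ℝ))‖ := φ.le_opNorm _
      _ = ‖φ‖ := by rw [lp.norm_single (by norm_num), norm_one, mul_one]
  · dsimp only
    rw [hφ, tsumCLM_single, add_sub_cancel_left]
    exact hasSum_smul_apply_single ENNReal.one_ne_top φ _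

end lp

theorem stmt_6_general (Γ : ℕ → ℕ → ℝ) (hΓ : ∀ i j, 0 ≤ Γ i j)
    (lam : ℕ → ℝ) (lamL lamU : ℝ) (hlamL : 0 < lamL)
    (hlam : ∀ i, lamL ≤ lam i ∧ lam i ≤ lamU)
    (Ψ : lp (fun _ : ℕ => ℝ) 1 →L[ℝ] lp (fun _ : ℕ => ℝ) 1)
    (hΨ : ∀ (x : lp (fun _ : ℕ => ℝ) 1) (i : ℕ),
      Ψ x i = ∑' j, (Γ i j / lam i) * x j)
    (hr : spectralRadius ℝ Ψ < 1) :
    ∃ (μ : ℕ → ℝ) (lamInf : ℝ), 0 < lamInf ∧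
      (∃ m : ℝ, 0 < m ∧ ∀ i, m ≤ μ i) ∧ BddAbove (Set.range μ) ∧
      ∀ i, (Summable fun j => μ j * Γ j i) ∧
        -(μ i * lam i) + ∑' j, μ j * Γ j i ≤ -(lamInf * μ i) := by
  have hlam_pos i : 0 < lam i := hlamL.trans_le (hlam i).1
  have hΨ_pos : Ψ ∈ (lp.nonnegCone 1).positiveOperators := fun x hx i => by
    rw [hΨ]
    exact tsum_nonneg fun j => mul_nonneg (div_nonneg (hΓ i j) (hlam_pos i).le) (hx j)
  have hΨ_single i j : Ψ (lp.single 1 i 1) j = Γ j i / lam j := by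
    rw [hΨ, tsum_eq_single i fun k hk => by rw [lp.single_apply_ne 1 i _ hk, mul_zero],
      lp.single_apply_self, mul_one]
  obtain ⟨μ, M, hμ, hsum⟩ := lp.exists_bounded_left_solution_one_sub hΨ_pos hr
  have hM : 0 < M := one_pos.trans_le ((hμ 0).1.trans (hμ 0).2)
  have hle i : μ i / lam i ≤ M / lamL := div_le_div₀ hM.le (hμ i).2 hlamL (hlam i).1
  have hsum' i : HasSum (fun j => μ j / lam j * Γ j i) (μ i - 1) := by
    convert hsum i using 2 with j
    rw [hΨ_single]
    ring
  refine ⟨fun j => μ j / lam j, lamL / M, by positivity, ⟨1 / lamU, ?_, fun i => ?_⟩,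
    ⟨M / lamL, Set.forall_mem_range.2 hle⟩, fun i => ⟨(hsum' i).summable, ?_⟩⟩
  · exact one_div_pos.2 ((hlam_pos 0).trans_le (hlam 0).2)
  · exact div_le_div₀ (zero_le_one.trans (hμ i).1) (hμ i).1 (hlam_pos i) (hlam i).2
  · rw [(hsum' i).tsum_eq, div_mul_cancel₀ _ (hlam_pos i).ne']
    have : lamL / M * (μ i / lam i) ≤ 1 :=
      calc lamL / M * (μ i / lam i) ≤ lamL / M * (M / lamL) :=
            mul_le_mul_of_nonneg_left (hle i) (by positivity)
        _ = 1 := by field_simp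
    linarith

/-- If `Γ` is nonnegative and bounded on `ℓ¹`, `Λ = diag(λᵢ)` with `0 < λ̲ ≤ λᵢ ≤ λ̄`, and the
spectral radius of `Ψ = Λ⁻¹Γ` on `ℓ¹` satisfies `r(Ψ) < 1`, then there is a uniformly positive
bounded sequence `μ` and `λ∞ > 0` with `−μᵢλᵢ + ∑ⱼ μⱼ γ_{ji} ≤ −λ∞ μᵢ` for all `i`. -/
theorem stmt_6 (Γ : ℕ → ℕ → ℝ) (hΓ : ∀ i j, 0 ≤ Γ i j)
    (hcol : ∀ j, Summable fun i => Γ i j)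
    (C : ℝ) (hC : ∀ j, ∑' i, Γ i j ≤ C)
    (lam : ℕ → ℝ) (lamL lamU : ℝ) (hlamL : 0 < lamL)
    (hlam : ∀ i, lamL ≤ lam i ∧ lam i ≤ lamU)
    (Ψ : lp (fun _ : ℕ => ℝ) 1 →L[ℝ] lp (fun _ : ℕ => ℝ) 1)
    (hΨ : ∀ (x : lp (fun _ : ℕ => ℝ) 1) (i : ℕ),
      Ψ x i = ∑' j, (Γ i j / lam i) * x j)
    (hr : spectralRadius ℝ Ψ < 1) :
    ∃ (μ : ℕ → ℝ) (lamInf : ℝ), 0 < lamInf ∧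
      (∃ m : ℝ, 0 < m ∧ ∀ i, m ≤ μ i) ∧ BddAbove (Set.range μ) ∧
      ∀ i, (Summable fun j => μ j * Γ j i) ∧
        -(μ i * lam i) + ∑' j, μ j * Γ j i ≤ -(lamInf * μ i) :=
  stmt_6_general Γ hΓ lam lamL lamU hlamL hlam Ψ hΨ hr
end

section
/- Under the hypotheses of the previous statement, for every ρ > 0 the vector μ and constant λ_∞ can be chosen so that λ_∞ ≥ (1 − r(Ψ)) λ̲ − ρ. -/
/-!
Write `Ψ = Λ⁻¹Γ`, a positive operator on `ℓ¹`. Its resolvent `R(s) = (s - Ψ)⁻¹` is positive for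
every `s > r(Ψ)`: for `s > ‖Ψ‖` this is the Neumann series, and positivity survives as `s`
decreases, since it is a closed condition and `R(s - ε) = R(s) (1 - ε R(s))⁻¹` is again a Neumann
series of positive operators. Fix `r(Ψ) < s < 1` with `(s - r(Ψ)) λ̲ < ρ` and let `ν = 𝟙ᵀ R(s)` be
the row of column sums of `R(s)`. Then `R(s) Ψ = s R(s) - 1` gives `νΨ = sν - 𝟙`, so `ν` is
bounded, `ν ≥ 1/s`, and `μᵀ = νᵀ Λ⁻¹` satisfies `μᵀ(-Λ + Γ) = νᵀ(Ψ - 1) ≤ -(1 - s) νᵀ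
≤ -(1 - s) λ̲ μᵀ`.
-/

open scoped ENNReal NNReal Ring lp

section SpectralRadius

variable {A : Type*} [NormedRing A] [NormedAlgebra ℝ A]

theorem mem_resolventSet_of_spectralRadius_lt_ofReal {a : A} {u : ℝ}
    (h : spectralRadius ℝ a < ENNReal.ofReal u) : u ∈ resolventSet ℝ a := by
  have hu : 0 < u := ENNReal.ofReal_pos.1 (pos_of_gt h)
  apply spectrum.mem_resolventSet_of_spectralRadius_lt
  rwa [← enorm_eq_nnnorm, Real.enorm_eq_ofReal hu.le]

end SpectralRadius

section PositiveResolvent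

variable {A : Type*} [NormedRing A] [CompleteSpace A] {P : Subsemiring A}

theorem Ring.inverse_one_sub_mem (hP : IsClosed (P : Set A)) {t : A} (ht : t ∈ P)
    (h : ‖t‖ < 1) : (1 - t)⁻¹ʳ ∈ P := by
  rw [← geom_series_eq_inverse t h]
  exact tsum_mem hP fun n => pow_mem ht n

theorem Ring.inverse_sub_mem (hP : IsClosed (P : Set A)) {x d : A} (hx : IsUnit x)
    (hxP : x⁻¹ʳ ∈ P) (hd : d ∈ P) (h : ‖d * x⁻¹ʳ‖ < 1) : (x - d)⁻¹ʳ ∈ P := by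
  have hfac : x - d = (1 - d * x⁻¹ʳ) * x := by
    rw [sub_mul, one_mul, mul_assoc, Ring.inverse_mul_cancel x hx, mul_one]
  rw [hfac, Ring.inverse_mul (Or.inr hx)]
  exact mul_mem hxP (Ring.inverse_one_sub_mem hP (mul_mem hd hxP) h)

variable [NormedAlgebra ℝ A]

theorem resolvent_mem_of_norm_lt (hP : IsClosed (P : Set A))
    (hP₀ : ∀ c : ℝ, 0 ≤ c → algebraMap ℝ A c ∈ P) {a : A} (ha : a ∈ P) {u : ℝ}
    (hu : ‖a‖ < u) : resolvent a u ∈ P := by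
  have hu₀ : 0 < u := (norm_nonneg a).trans_lt hu
  have hunit : IsUnit (algebraMap ℝ A u) := (Units.mk0 u hu₀.ne').isUnit.map _
  have hinv : (algebraMap ℝ A u)⁻¹ʳ = algebraMap ℝ A u⁻¹ := by
    have hmul : algebraMap ℝ A u * algebraMap ℝ A u⁻¹ = 1 := by
      rw [← map_mul, mul_inv_cancel₀ hu₀.ne', map_one]
    rw [← Ring.inverse_mul_cancel_left _ (algebraMap ℝ A u⁻¹) hunit, hmul, mul_one]
  refine Ring.inverse_sub_mem hP hunit (hinv ▸ hP₀ _ (inv_nonneg.2 hu₀.le)) ha ?_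
  rw [hinv, ← Algebra.commutes, ← Algebra.smul_def, norm_smul,
    Real.norm_of_nonneg (inv_nonneg.2 hu₀.le)]
  exact (inv_mul_lt_one₀ hu₀).2 hu

theorem resolvent_mem_of_le (hP : IsClosed (P : Set A))
    (hP₀ : ∀ c : ℝ, 0 ≤ c → algebraMap ℝ A c ∈ P) {a : A} {u₀ u : ℝ}
    (hu₀ : u₀ ∈ resolventSet ℝ a) (hR : resolvent a u₀ ∈ P) (hle : u ≤ u₀)
    (h : (u₀ - u) * ‖resolvent a u₀‖ < 1) : resolvent a u ∈ P := by
  have hsub : algebraMap ℝ A u - a = (algebraMap ℝ A u₀ - a) - algebraMap ℝ A (u₀ - u) := by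
    rw [map_sub]; abel
  rw [resolvent, hsub]
  refine Ring.inverse_sub_mem hP hu₀ hR (hP₀ _ (sub_nonneg.2 hle)) ?_
  rwa [← Algebra.smul_def, norm_smul, Real.norm_of_nonneg (sub_nonneg.2 hle)]

open Set in
theorem resolvent_mem_of_spectralRadius_lt (hP : IsClosed (P : Set A))
    (hP₀ : ∀ c : ℝ, 0 ≤ c → algebraMap ℝ A c ∈ P) {a : A} (ha : a ∈ P) {u : ℝ}
    (hu : spectralRadius ℝ a < ENNReal.ofReal u) : resolvent a u ∈ P := by
  have hres : ∀ v, u ≤ v → v ∈ resolventSet ℝ a := fun v hv ↦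
    mem_resolventSet_of_spectralRadius_lt_ofReal (hu.trans_le (ENNReal.ofReal_le_ofReal hv))
  set U := max u (‖a‖ + 1)
  have hclosed : IsClosed ({v | resolvent a v ∈ P} ∩ Icc u U) := by
    have hcont : ContinuousOn (resolvent a) (Icc u U) := fun v hv ↦
      (spectrum.hasDerivAt_resolvent_const_left (hres v hv.1)).continuousAt.continuousWithinAt
    rw [inter_comm]
    exact hcont.preimage_isClosed_of_isClosed isClosed_Icc hP
  have hU : resolvent a U ∈ P :=
    resolvent_mem_of_norm_lt hP hP₀ ha (lt_max_of_lt_right (lt_add_one _))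
  refine hclosed.Icc_subset_of_forall_exists_lt hU ?_ ⟨le_rfl, le_max_left _ _⟩
  rintro v ⟨hvP, hv⟩ w hwv
  set δ := (‖resolvent a v‖ + 1)⁻¹
  have hδ : 0 < δ := by positivity
  have hδR : δ * ‖resolvent a v‖ < 1 := by
    rw [inv_mul_lt_one₀ (by positivity)]; exact lt_add_one _
  refine ⟨max w (v - δ), ?_, le_max_left _ _, max_lt hwv (by linarith)⟩
  refine resolvent_mem_of_le hP hP₀ (hres v hv.1.le) hvP (max_le hwv.le (by linarith)) ?_
  refine lt_of_le_of_lt (mul_le_mul_of_nonneg_right ?_ (norm_nonneg _)) hδR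
  linarith [le_max_right w (v - δ)]

end PositiveResolvent

namespace lp

variable {ι : Type*} {p : ℝ≥0∞}

theorem single_nonneg [DecidableEq ι] (j : ι) :
    0 ≤ ⇑(lp.single p j (1 : ℝ) : lp (fun _ : ι => ℝ) p) := fun i => by
  simp [lp.single_apply, Pi.single_apply]; split_ifs <;> norm_num

variable [Fact (1 ≤ p)]

theorem apply_single_of_apply_eq_tsum [DecidableEq ι]
    {T : lp (fun _ : ι => ℝ) p →L[ℝ] lp (fun _ : ι => ℝ) p} {K : ι → ι → ℝ}
    (hT : ∀ x i, T x i = ∑' j, K i j * x j) (i j : ι) :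
    T (lp.single p j 1) i = K i j := by
  rw [hT]
  simp [lp.single_apply, Pi.single_apply]

variable (ι p) in
def positiveOperators : Subsemiring (lp (fun _ : ι => ℝ) p →L[ℝ] lp (fun _ : ι => ℝ) p) where
  carrier := {T | ∀ x : lp (fun _ : ι => ℝ) p, 0 ≤ ⇑x → 0 ≤ ⇑(T x)}
  mul_mem' hS hT x hx := hS _ (hT x hx)
  one_mem' _ hx := hx
  add_mem' hS hT x hx := by
    rw [add_apply, lp.coeFn_add]
    exact add_nonneg (hS x hx) (hT x hx)
  zero_mem' _ _ _ := le_rfl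

theorem isClosed_positiveOperators :
    IsClosed (positiveOperators ι p : Set (lp (fun _ : ι => ℝ) p →L[ℝ] lp (fun _ : ι => ℝ) p)) := by
  have hcone : IsClosed {y : lp (fun _ : ι => ℝ) p | 0 ≤ ⇑y} :=
    isClosed_le continuous_const lp.uniformContinuous_coe.continuous
  simp only [positiveOperators, Subsemiring.coe_set_mk, Set.ofPred_forall]
  exact isClosed_iInter fun x => isClosed_iInter fun _ =>
    hcone.preimage (ContinuousLinearMap.apply ℝ _ x).continuous

theorem algebraMap_mem_positiveOperators {c : ℝ} (hc : 0 ≤ c) :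
    algebraMap ℝ _ c ∈ positiveOperators ι p := fun x hx i => by
  simpa [Algebra.algebraMap_eq_smul_one] using mul_nonneg hc (hx i)

theorem mem_positiveOperators_of_apply_eq_tsum
    {T : lp (fun _ : ι => ℝ) p →L[ℝ] lp (fun _ : ι => ℝ) p} {K : ι → ι → ℝ}
    (hK : ∀ i j, 0 ≤ K i j) (hT : ∀ x i, T x i = ∑' j, K i j * x j) :
    T ∈ positiveOperators ι p := fun x hx i => by
  rw [Pi.zero_apply, hT]
  exact tsum_nonneg fun j => mul_nonneg (hK i j) (hx j)

theorem hasSum_apply_single_mul_tsum_resolvent [DecidableEq ι]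
    {T : ℓ¹(ι, ℝ) →L[ℝ] ℓ¹(ι, ℝ)} {s : ℝ} (hs : s ∈ resolventSet ℝ T) (j : ι) :
    HasSum (fun m : ι => T (lp.single 1 j 1) m * ∑' i, resolvent T s (lp.single 1 m 1) i)
      (s * ∑' i, resolvent T s (lp.single 1 j 1) i - 1) := by
  have hRT : resolvent T s * T = s • resolvent T s - 1 := by
    have := Ring.inverse_mul_cancel _ hs
    rw [mul_sub, ← Algebra.commutes, ← Algebra.smul_def] at this
    rw [resolvent, ← this]; abel
  have hexp : HasSum (fun m => T (lp.single 1 j 1) m • lp.single 1 m (1 : ℝ))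
      (T (lp.single 1 j 1)) := by
    simpa [← lp.single_smul] using lp.hasSum_single ENNReal.one_ne_top (T (lp.single 1 j 1))
  have hsum_single : lp.tsumCLM ℝ ι ℝ (lp.single 1 j 1) = 1 := by
    simp [lp.single_apply, Pi.single_apply]
  have h := hexp.mapL ((lp.tsumCLM ℝ ι ℝ).comp (resolvent T s))
  rw [ContinuousLinearMap.comp_apply, ← mul_apply_eq_comp, hRT, sub_apply, smul_apply,
    one_apply_eq_self, map_sub, map_smul, hsum_single] at h
  simpa only [map_smul, smul_eq_mul, ContinuousLinearMap.comp_apply, lp.tsumCLM_apply] using h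

theorem exists_weight_of_spectralRadius_lt [DecidableEq ι] {T : ℓ¹(ι, ℝ) →L[ℝ] ℓ¹(ι, ℝ)}
    (hT : T ∈ positiveOperators ι 1) {s : ℝ} (hs : spectralRadius ℝ T < ENNReal.ofReal s) :
    ∃ ν : ι → ℝ, (∀ j, s⁻¹ ≤ ν j) ∧ BddAbove (Set.range ν) ∧
      ∀ j, HasSum (fun m => T (lp.single 1 j 1) m * ν m) (s * ν j - 1) := by
  have hs₀ : 0 < s := ENNReal.ofReal_pos.1 (pos_of_gt hs)
  have hres := mem_resolventSet_of_spectralRadius_lt_ofReal hs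
  have hR : resolvent T s ∈ positiveOperators ι 1 := resolvent_mem_of_spectralRadius_lt
    isClosed_positiveOperators (fun _ ↦ algebraMap_mem_positiveOperators) hT hs
  refine ⟨fun j => ∑' i, resolvent T s (lp.single 1 j 1) i, fun j => ?_, ⟨‖resolvent T s‖, ?_⟩,
    hasSum_apply_single_mul_tsum_resolvent hres⟩
  · have h := (hasSum_apply_single_mul_tsum_resolvent hres j).nonneg fun m =>
      mul_nonneg (hT _ (single_nonneg j) m) (tsum_nonneg (hR _ (single_nonneg m)))
    rw [inv_le_iff_one_le_mul₀ hs₀]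
    linarith
  · rintro _ ⟨j, rfl⟩
    calc _ ≤ ‖∑' i, resolvent T s (lp.single 1 j 1) i‖ := Real.le_norm_self _
      _ ≤ ‖resolvent T s (lp.single 1 j 1)‖ := lp.norm_tsum_le _
      _ ≤ ‖resolvent T s‖ * ‖(lp.single 1 j 1 : ℓ¹(ι, ℝ))‖ := (resolvent T s).le_opNorm _
      _ = ‖resolvent T s‖ := by rw [lp.norm_single one_pos, norm_one, mul_one]

end lp

/-- `μᵀ(-Λ + Γ) ≤ -c μᵀ` for `Λ = diag lam`, with `μ` bounded and bounded away from zero. -/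
def IsLinearLyapunovWeight {ι : Type*} (Γ : ι → ι → ℝ) (lam : ι → ℝ) (c : ℝ) (μ : ι → ℝ) :
    Prop :=
  (∃ m : ℝ, 0 < m ∧ ∀ i, m ≤ μ i) ∧ BddAbove (Set.range μ) ∧
    ∀ i, (Summable fun j => μ j * Γ j i) ∧ -(μ i * lam i) + ∑' j, μ j * Γ j i ≤ -(c * μ i)

theorem isLinearLyapunovWeight_div {ι : Type*} [Nonempty ι] {Γ : ι → ι → ℝ} {lam ν : ι → ℝ}
    {lamL lamU s : ℝ} (hlamL : 0 < lamL) (hlam : ∀ i, lamL ≤ lam i ∧ lam i ≤ lamU)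
    (hs₀ : 0 < s) (hs₁ : s ≤ 1) (hν : ∀ j, s⁻¹ ≤ ν j) (hB : BddAbove (Set.range ν))
    (hνΨ : ∀ i, HasSum (fun j => Γ j i / lam j * ν j) (s * ν i - 1)) :
    IsLinearLyapunovWeight Γ lam ((1 - s) * lamL) fun j => ν j / lam j := by
  have hlam₀ : ∀ i, 0 < lam i := fun i => hlamL.trans_le (hlam i).1
  have hν₀ : ∀ j, 0 ≤ ν j := fun j => (inv_nonneg.2 hs₀.le).trans (hν j)
  obtain ⟨B, hB⟩ := hB
  refine ⟨⟨s⁻¹ / lamU, ?_, fun j => div_le_div₀ (hν₀ j) (hν j) (hlam₀ j) (hlam j).2⟩,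
    ⟨B / lamL, ?_⟩, fun i => ?_⟩
  · obtain ⟨i⟩ := ‹Nonempty ι›
    exact div_pos (inv_pos.2 hs₀) (hlam₀ i |>.trans_le (hlam i).2)
  · rintro _ ⟨j, rfl⟩
    exact div_le_div₀ ((hν₀ j).trans (hB ⟨j, rfl⟩)) (hB ⟨j, rfl⟩) hlamL (hlam j).1
  have hsum : HasSum (fun j => ν j / lam j * Γ j i) (s * ν i - 1) := by
    convert hνΨ i using 2 with m
    ring
  refine ⟨hsum.summable, ?_⟩
  have hμ : lamL * (ν i / lam i) ≤ ν i := by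
    rw [mul_div_assoc', div_le_iff₀ (hlam₀ i)]
    nlinarith [hlam i, hν₀ i]
  rw [hsum.tsum_eq, div_mul_cancel₀ _ (hlam₀ i).ne']
  nlinarith

theorem stmt_7_general (Γ : ℕ → ℕ → ℝ) (hΓ : ∀ i j, 0 ≤ Γ i j)
    (lam : ℕ → ℝ) (lamL lamU : ℝ) (hlamL : 0 < lamL)
    (hlam : ∀ i, lamL ≤ lam i ∧ lam i ≤ lamU)
    (Ψ : lp (fun _ : ℕ => ℝ) 1 →L[ℝ] lp (fun _ : ℕ => ℝ) 1)
    (hΨ : ∀ (x : lp (fun _ : ℕ => ℝ) 1) (i : ℕ),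
      Ψ x i = ∑' j, (Γ i j / lam i) * x j)
    (hr : spectralRadius ℝ Ψ < 1)
    (ρ : ℝ) (hρ : 0 < ρ) :
    ∃ (μ : ℕ → ℝ) (lamInf : ℝ), 0 < lamInf ∧
      lamInf ≥ (1 - (spectralRadius ℝ Ψ).toReal) * lamL - ρ ∧
      (∃ m : ℝ, 0 < m ∧ ∀ i, m ≤ μ i) ∧ BddAbove (Set.range μ) ∧
      ∀ i, (Summable fun j => μ j * Γ j i) ∧
        -(μ i * lam i) + ∑' j, μ j * Γ j i ≤ -(lamInf * μ i) := by
  set r := (spectralRadius ℝ Ψ).toReal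
  have hr₁ : r < 1 := by
    simpa using (ENNReal.toReal_lt_toReal hr.ne_top ENNReal.one_ne_top).2 hr
  obtain ⟨s, hrs, hs⟩ := exists_between (lt_min hr₁ (lt_add_of_pos_right r (div_pos hρ hlamL)))
  have hs₀ : 0 < s := ENNReal.toReal_nonneg.trans_lt hrs
  have hs₁ : s < 1 := hs.trans_le (min_le_left _ _)
  have hsρ : (s - r) * lamL < ρ := by
    rw [← lt_div_iff₀ hlamL]; linarith [hs.trans_le (min_le_right _ _)]
  have hΨP := lp.mem_positiveOperators_of_apply_eq_tsum
    (fun i j => div_nonneg (hΓ i j) (hlamL.trans_le (hlam i).1).le) hΨ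
  obtain ⟨ν, hν, hB, hνΨ⟩ := lp.exists_weight_of_spectralRadius_lt hΨP
    ((ENNReal.lt_ofReal_iff_toReal_lt hr.ne_top).2 hrs)
  refine ⟨_, _, mul_pos (sub_pos.2 hs₁) hlamL, by linarith,
    isLinearLyapunovWeight_div hlamL hlam hs₀ hs₁.le hν hB fun i => ?_⟩
  simpa only [lp.apply_single_of_apply_eq_tsum hΨ] using hνΨ i

/-- Under the hypotheses of the small-gain lemma, for every `ρ > 0` the vector `μ` and
constant `λ∞` can be chosen so that `λ∞ ≥ (1 − r(Ψ)) λ̲ − ρ`. -/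
theorem stmt_7 (Γ : ℕ → ℕ → ℝ) (hΓ : ∀ i j, 0 ≤ Γ i j)
    (hcol : ∀ j, Summable fun i => Γ i j)
    (C : ℝ) (hC : ∀ j, ∑' i, Γ i j ≤ C)
    (lam : ℕ → ℝ) (lamL lamU : ℝ) (hlamL : 0 < lamL)
    (hlam : ∀ i, lamL ≤ lam i ∧ lam i ≤ lamU)
    (Ψ : lp (fun _ : ℕ => ℝ) 1 →L[ℝ] lp (fun _ : ℕ => ℝ) 1)
    (hΨ : ∀ (x : lp (fun _ : ℕ => ℝ) 1) (i : ℕ),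
      Ψ x i = ∑' j, (Γ i j / lam i) * x j)
    (hr : spectralRadius ℝ Ψ < 1)
    (ρ : ℝ) (hρ : 0 < ρ) :
    ∃ (μ : ℕ → ℝ) (lamInf : ℝ), 0 < lamInf ∧
      lamInf ≥ (1 - (spectralRadius ℝ Ψ).toReal) * lamL - ρ ∧
      (∃ m : ℝ, 0 < m ∧ ∀ i, m ≤ μ i) ∧ BddAbove (Set.range μ) ∧
      ∀ i, (Summable fun j => μ j * Γ j i) ∧
        -(μ i * lam i) + ∑' j, μ j * Γ j i ≤ -(lamInf * μ i) :=
  stmt_7_general Γ hΓ lam lamL lamU hlamL hlam Ψ hΨ hr ρ hρ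
end

section
/- Let X be a Banach space and V : X → ℝ_+ be continuous on X \ A with ω̲ |x|_A^b ≤ V(x) ≤ ω̄ |x|_A^b for constants ω̲, ω̄, b > 0, and suppose along every trajectory φ(t,x⁰,u) of a forward complete system the Dini derivative satisfies D⁺(V∘φ)(t) ≤ −κ V(φ(t)) + γ(|u|_∞) for all t with φ(t) ∉ A, where κ > 0 and γ ∈ K_∞. Then the system is exponentially ISS with respect to A: there exist M, a > 0 and γ̃ ∈ K such that |φ(t,x⁰,u)|_A ≤ M e^{−at} |x⁰|_A + γ̃(|u|_∞) for all t ≥ 0. -/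
/-!
Along a trajectory, `W = V ∘ φ` satisfies `D⁺W ≤ -κ W + g` wherever `W > 0`, with `g = γ(|u|)`.
Comparing `W` with the solutions `e^{-κt} W(0) + (g + ε)/κ` of the perturbed linear equation
(at a first touching point the strict slack `ε` makes the slope of `W` fall below that of the
barrier) and letting `ε → 0` gives `W(t) ≤ e^{-κt} W(0) + g/κ`. The sandwich bounds on `V` turn
this into a bound on `|φ(t)|_A ^ b`, and `(P + G)^{1/b} ≤ (2P)^{1/b} + (2G)^{1/b}` splits the
`b`-th root into the exponential and the gain term.
-/

open Filter Set Metric Real Topology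

theorem image_le_of_eventually_slope_lt_deriv_boundary {f B B' : ℝ → ℝ} {a b : ℝ}
    (hf : ContinuousOn f (Icc a b)) (ha : f a ≤ B a) (hB : ∀ x, HasDerivAt B (B' x) x)
    (bound : ∀ x ∈ Ico a b, f x = B x → ∃ r < B' x, ∀ᶠ z in 𝓝[>] x, slope f x z < r) :
    ∀ ⦃x⦄, x ∈ Icc a b → f x ≤ B x := by
  have hfB : ContinuousOn (fun x => (f x, B x)) (Icc a b) :=
    hf.prodMk fun x _ => (hB x).continuousAt.continuousWithinAt
  have hclosed : IsClosed ({x | f x ≤ B x} ∩ Icc a b) := by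
    rw [inter_comm]
    exact hfB.preimage_isClosed_of_isClosed isClosed_Icc OrderClosedTopology.isClosed_le'
  refine hclosed.Icc_subset_of_forall_mem_nhdsWithin ha ?_
  rintro x ⟨hfx : f x ≤ B x, hx⟩
  rcases hfx.lt_or_eq with hlt | heq
  · have : ∀ᶠ z in 𝓝[Icc a b] x, f z < B z :=
      hfB x (Ico_subset_Icc_self hx) ((isOpen_lt continuous_fst continuous_snd).mem_nhds hlt)
    have : ∀ᶠ z in 𝓝[>] x, f z < B z := nhdsWithin_le_of_mem (Icc_mem_nhdsGT_of_mem hx) this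
    exact this.mono fun _ => le_of_lt
  · obtain ⟨r, hrB, hfr⟩ := bound x hx heq
    have hBr : ∀ᶠ z in 𝓝[>] x, r < slope B x z :=
      (hasDerivWithinAt_iff_tendsto_slope' (lt_irrefl x)).1 (hB x).hasDerivWithinAt
        (Ioi_mem_nhds hrB)
    filter_upwards [hfr, hBr, self_mem_nhdsWithin] with z hfz hBz (hxz : x < z)
    have := (hfz.trans hBz).le
    rwa [slope_def_field, slope_def_field, div_le_div_iff_of_pos_right (sub_pos.2 hxz), heq,
      sub_le_sub_iff_right] at this

/-- In `ℝ` the `limsup` of a function that is not bounded above is the junk value `0`;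
`r ≤ 0` rules it out. -/
theorem eventually_slope_lt_of_limsup_lt {f : ℝ → ℝ} {x r : ℝ}
    (h : limsup (fun h => (f (x + h) - f x) / h) (𝓝[>] 0) < r) (hr : r ≤ 0) :
    ∀ᶠ z in 𝓝[>] x, slope f x z < r := by
  by_cases hbdd : IsBoundedUnder (· ≤ ·) (𝓝[>] (0 : ℝ)) fun h => (f (x + h) - f x) / h
  · have hev := eventually_lt_of_limsup_lt h hbdd
    rw [← add_zero x, ← map_add_left_nhdsGT, eventually_map]
    refine hev.mono fun h hh => ?_
    rwa [slope_def_field, add_zero, add_sub_cancel_left]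
  · rw [Real.limsup_of_not_isBoundedUnder hbdd] at h
    exact absurd (h.trans_le hr) (lt_irrefl 0)

theorem le_exp_mul_add_div_of_limsup_le {W : ℝ → ℝ} {κ g : ℝ} (hW : ContinuousOn W (Ici 0))
    (hW0 : 0 ≤ W 0) (hκ : 0 < κ) (hg : 0 ≤ g)
    (hD : ∀ t, 0 ≤ t → 0 < W t →
      limsup (fun h => (W (t + h) - W t) / h) (𝓝[>] 0) ≤ -κ * W t + g) :
    ∀ t, 0 ≤ t → W t ≤ exp (-κ * t) * W 0 + g / κ := by
  intro t ht
  have hperturbed : ∀ ε > 0, W t ≤ exp (-κ * t) * W 0 + (g + ε) / κ := by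
    intro ε hε
    let B : ℝ → ℝ := fun s => exp (-κ * s) * W 0 + (g + ε) / κ
    have hB : ∀ s, HasDerivAt B (-κ * B s + g + ε) s := fun s =>
      (((hasDerivAt_id s).const_mul (-κ)).exp.mul_const (W 0)).add_const ((g + ε) / κ)
        |>.congr_deriv (by simp only [B, id]; field_simp; ring)
    refine image_le_of_eventually_slope_lt_deriv_boundary (hW.mono Icc_subset_Ici_self)
      (by simp only [B, mul_zero, exp_zero, one_mul]; exact le_add_of_nonneg_right (by positivity))
      hB ?_ ⟨ht, le_rfl⟩
    rintro s ⟨hs, -⟩ hWB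
    have hBs : (g + ε) / κ ≤ B s := le_add_of_nonneg_left (by positivity)
    have hκB : g + ε ≤ κ * B s := by rwa [div_le_iff₀' hκ] at hBs
    refine ⟨-κ * B s + g + ε / 2, by linarith, eventually_slope_lt_of_limsup_lt ?_ (by linarith)⟩
    calc _ ≤ -κ * W s + g := hD s hs (hWB ▸ (by positivity : 0 < (g + ε) / κ).trans_le hBs)
      _ < -κ * B s + g + ε / 2 := by rw [hWB]; linarith
  refine le_of_forall_pos_le_add fun ε hε => ?_
  have := hperturbed (κ * ε) (by positivity)
  rwa [add_div, mul_div_cancel_left₀ _ hκ.ne', ← add_assoc] at this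

theorem continuous_of_continuousOn_compl_of_le_infDist_rpow {X : Type*} [PseudoMetricSpace X]
    {A : Set X} {V : X → ℝ} {c b : ℝ} (hV : ContinuousOn V Aᶜ) (hb : 0 < b)
    (hV_nonneg : ∀ x, 0 ≤ V x) (hV_le : ∀ x, V x ≤ c * infDist x A ^ b) : Continuous V := by
  refine continuous_iff_continuousAt.2 fun x => ?_
  by_cases hx : infDist x A = 0
  · have hVx : V x = 0 := le_antisymm (by simpa [hx, hb.ne'] using hV_le x) (hV_nonneg x)
    have hlim : Tendsto (fun y => c * infDist y A ^ b) (𝓝 x) (𝓝 0) := by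
      simpa [hx, hb.ne'] using
        ((continuous_infDist_pt A).rpow_const fun _ => Or.inr hb.le).const_mul c |>.tendsto x
    rw [ContinuousAt, hVx]
    exact squeeze_zero hV_nonneg hV_le hlim
  · have : (closure A)ᶜ ∈ 𝓝 x :=
      isClosed_closure.isOpen_compl.mem_nhds fun h => hx (infDist_zero_of_mem_closure h)
    exact hV.continuousAt (mem_of_superset this (compl_subset_compl.2 subset_closure))

theorem le_two_mul_rpow_inv_add_of_rpow_le_add {d P G b : ℝ} (hd : 0 ≤ d) (hP : 0 ≤ P)
    (hG : 0 ≤ G) (hb : 0 < b) (h : d ^ b ≤ P + G) : d ≤ (2 * P) ^ b⁻¹ + (2 * G) ^ b⁻¹ := by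
  have hmax : d ^ b ≤ max (2 * P) (2 * G) := by
    rw [← mul_max_of_nonneg _ _ zero_le_two, two_mul]
    linarith [add_le_add (le_max_left P G) (le_max_right P G)]
  calc d ≤ max (2 * P) (2 * G) ^ b⁻¹ :=
        (le_rpow_inv_iff_of_pos hd (by positivity) hb).2 hmax
    _ = max ((2 * P) ^ b⁻¹) ((2 * G) ^ b⁻¹) :=
        rpow_max (by positivity) (by positivity) (by positivity)
    _ ≤ (2 * P) ^ b⁻¹ + (2 * G) ^ b⁻¹ := max_le_add_of_nonneg (by positivity) (by positivity)

theorem le_mul_exp_mul_add_of_rpow_le_decay {d d₀ v v₀ ω₁ ω₂ b κ g t : ℝ} (hd : 0 ≤ d)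
    (hd₀ : 0 ≤ d₀) (hω₁ : 0 < ω₁) (hω₂ : 0 ≤ ω₂) (hb : 0 < b) (hκ : 0 < κ) (hg : 0 ≤ g)
    (hv : ω₁ * d ^ b ≤ v) (hv₀ : v₀ ≤ ω₂ * d₀ ^ b) (hdecay : v ≤ exp (-κ * t) * v₀ + g / κ) :
    d ≤ (2 * ω₂ / ω₁) ^ b⁻¹ * exp (-(κ / b) * t) * d₀ + (2 * g / (κ * ω₁)) ^ b⁻¹ := by
  have hpow : d ^ b ≤ ω₂ / ω₁ * exp (-κ * t) * d₀ ^ b + g / (κ * ω₁) := by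
    refine le_of_mul_le_mul_left ?_ hω₁
    calc ω₁ * d ^ b ≤ exp (-κ * t) * (ω₂ * d₀ ^ b) + g / κ :=
          hv.trans (hdecay.trans (by gcongr))
      _ = _ := by field_simp
  calc d ≤ (2 * (ω₂ / ω₁ * exp (-κ * t) * d₀ ^ b)) ^ b⁻¹ + (2 * (g / (κ * ω₁))) ^ b⁻¹ :=
        le_two_mul_rpow_inv_add_of_rpow_le_add hd (by positivity) (by positivity) hb hpow
    _ = (2 * ω₂ / ω₁) ^ b⁻¹ * exp (-(κ / b) * t) * d₀ + (2 * g / (κ * ω₁)) ^ b⁻¹ := by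
      rw [← mul_assoc, ← mul_assoc, ← mul_div_assoc, mul_rpow (by positivity) (by positivity),
        mul_rpow (by positivity) (by positivity), rpow_rpow_inv hd₀ hb.ne', ← exp_mul,
        mul_div_assoc]
      ring_nf

theorem stmt_9_general {X : Type*} [NormedAddCommGroup X] [NormedSpace ℝ X]
    (A : Set X)
    (V : X → ℝ) (hVcont : ContinuousOn V Aᶜ)
    (ω₁ ω₂ b κ : ℝ) (hω₁ : 0 < ω₁) (hω₂ : 0 < ω₂) (hb : 0 < b) (hκ : 0 < κ)
    (hV : ∀ x, ω₁ * Metric.infDist x A ^ b ≤ V x ∧ V x ≤ ω₂ * Metric.infDist x A ^ b)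
    (γ : ℝ → ℝ) (hγc : Continuous γ) (hγm : StrictMono γ) (hγ0 : γ 0 = 0)
    {ι : Type*} (r : ι → ℝ) (hr : ∀ u, 0 ≤ r u)
    (φ : X → ι → ℝ → X)
    (hφ0 : ∀ x0 u, φ x0 u 0 = x0)
    (hφc : ∀ x0 u, Continuous (φ x0 u))
    (hDini : ∀ x0 u t, 0 ≤ t → φ x0 u t ∉ A →
      Filter.limsup (fun h : ℝ => (V (φ x0 u (t + h)) - V (φ x0 u t)) / h)
          (nhdsWithin 0 (Set.Ioi 0))
        ≤ -κ * V (φ x0 u t) + γ (r u)) :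
    ∃ M c : ℝ, 0 < M ∧ 0 < c ∧ ∃ γ' : ℝ → ℝ, Continuous γ' ∧
      StrictMonoOn γ' (Set.Ici 0) ∧ γ' 0 = 0 ∧
      ∀ x0 u t, 0 ≤ t →
        Metric.infDist (φ x0 u t) A
          ≤ M * Real.exp (-c * t) * Metric.infDist x0 A + γ' (r u) := by
  have hV_nonneg : ∀ x, 0 ≤ V x := fun x =>
    (mul_nonneg hω₁.le (rpow_nonneg infDist_nonneg b)).trans (hV x).1
  have hV_cont : Continuous V :=
    continuous_of_continuousOn_compl_of_le_infDist_rpow hVcont hb hV_nonneg fun x => (hV x).2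
  have hV_mem : ∀ x ∈ A, V x = 0 := fun x hx =>
    le_antisymm (by simpa [infDist_zero_of_mem hx, hb.ne'] using (hV x).2) (hV_nonneg x)
  have hγ_nonneg : ∀ s, 0 ≤ s → 0 ≤ γ s := fun s hs => hγ0 ▸ hγm.monotone hs
  refine ⟨(2 * ω₂ / ω₁) ^ b⁻¹, κ / b, by positivity, by positivity,
    fun s => (2 * γ s / (κ * ω₁)) ^ b⁻¹, ?_, ?_, by simp [hγ0, hb.ne'], ?_⟩
  · exact ((hγc.const_mul 2).div_const _).rpow_const fun _ => Or.inr (by positivity)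
  · intro s hs s' _ hss'
    have := hγ_nonneg s hs
    exact rpow_lt_rpow (by positivity) (by gcongr; exact hγm hss') (by positivity)
  · intro x₀ u t ht
    have hdecay : V (φ x₀ u t) ≤ exp (-κ * t) * V x₀ + γ (r u) / κ := by
      simpa [hφ0] using le_exp_mul_add_div_of_limsup_le (hV_cont.comp (hφc x₀ u)).continuousOn
        (hV_nonneg _) hκ (hγ_nonneg _ (hr u))
        (fun s hs hpos => hDini x₀ u s hs fun hmem => hpos.ne' (hV_mem _ hmem)) t ht
    exact le_mul_exp_mul_add_of_rpow_le_decay infDist_nonneg infDist_nonneg hω₁ hω₂.le hb hκ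
      (hγ_nonneg _ (hr u)) (hV _).1 (hV x₀).2 hdecay

/-- Existence of an eISS Lyapunov function w.r.t. a nonempty closed set `A` (dissipative form,
with Dini derivative along trajectories) implies exponential ISS w.r.t. `A`. -/
theorem stmt_9 {X : Type*} [NormedAddCommGroup X] [NormedSpace ℝ X]
    (A : Set X) (hAne : A.Nonempty) (hAcl : IsClosed A)
    (V : X → ℝ) (hVcont : ContinuousOn V Aᶜ)
    (ω₁ ω₂ b κ : ℝ) (hω₁ : 0 < ω₁) (hω₂ : 0 < ω₂) (hb : 0 < b) (hκ : 0 < κ)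
    (hV : ∀ x, ω₁ * Metric.infDist x A ^ b ≤ V x ∧ V x ≤ ω₂ * Metric.infDist x A ^ b)
    (γ : ℝ → ℝ) (hγc : Continuous γ) (hγm : StrictMono γ) (hγ0 : γ 0 = 0)
    (hγtop : Filter.Tendsto γ Filter.atTop Filter.atTop)
    {ι : Type*} (r : ι → ℝ) (hr : ∀ u, 0 ≤ r u)
    (φ : X → ι → ℝ → X)
    (hφ0 : ∀ x0 u, φ x0 u 0 = x0)
    (hφc : ∀ x0 u, Continuous (φ x0 u))
    (hDini : ∀ x0 u t, 0 ≤ t → φ x0 u t ∉ A →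
      Filter.limsup (fun h : ℝ => (V (φ x0 u (t + h)) - V (φ x0 u t)) / h)
          (nhdsWithin 0 (Set.Ioi 0))
        ≤ -κ * V (φ x0 u t) + γ (r u)) :
    ∃ M c : ℝ, 0 < M ∧ 0 < c ∧ ∃ γ' : ℝ → ℝ, Continuous γ' ∧
      StrictMonoOn γ' (Set.Ici 0) ∧ γ' 0 = 0 ∧
      ∀ x0 u t, 0 ≤ t →
        Metric.infDist (φ x0 u t) A
          ≤ M * Real.exp (-c * t) * Metric.infDist x0 A + γ' (r u) :=
  stmt_9_general A V hVcont ω₁ ω₂ b κ hω₁ hω₂ hb hκ hV γ hγc hγm hγ0 r hr φ hφ0 hφc hDini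
end
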